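/- arXiv:2602.08097 — 5 statements merged into one kernel-verified Lean document; each statement's English description precedes it below -/
import Mathlib

section
/- For real numbers α₁ ≥ α₂ > 1 and points p, x, y, z in a metric space with D(p,z) = 1, if D(y,z) ≤ 1/α₁ and D(x,y) ≤ D(p,y)/α₂, then D(x,z) ≤ (α₁ + α₂ + 1)/(α₁·α₂). -/
theorem stmt_0 {X : Type*} [MetricSpace X] (α₁ α₂ : ℝ)
    (h12 : α₂ ≤ α₁) (h2 : 1 < α₂) (p x y z : X)
    (hpz : dist p z = 1)
    (hyz : dist y z ≤ 1 / α₁)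
    (hxy : dist x y ≤ dist p y / α₂) :
    dist x z ≤ (α₁ + α₂ + 1) / (α₁ * α₂) := by
  have h1 : (1:ℝ) < α₁ := lt_of_lt_of_le h2 h12
  have ha1 : (0:ℝ) < α₁ := by linarith
  have ha2 : (0:ℝ) < α₂ := by linarith
  have t1 : dist x z ≤ dist x y + dist y z := dist_triangle x y z
  have t2 : dist p y ≤ dist p z + dist z y := dist_triangle p z y
  rw [dist_comm z y] at t2
  rw [le_div_iff₀ ha2] at hxy
  rw [le_div_iff₀ (mul_pos ha1 ha2)]
  rw [le_div_iff₀ ha1] at hyz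
  nlinarith [mul_le_mul_of_nonneg_right hxy ha1.le, mul_le_mul_of_nonneg_right hyz ha2.le,
    mul_le_mul_of_nonneg_right t2 ha1.le, mul_le_mul_of_nonneg_right t1 (mul_pos ha1 ha2).le]
end

section
/- For real numbers α₁ ≥ α₂ > 1, there exist points p, x, y, z on the real line (with the standard metric) such that D(p,z) = 1, D(y,z) ≤ 1/α₁, D(x,y) ≤ D(p,y)/α₂, and D(x,z) = (α₁ + α₂ + 1)/(α₁·α₂). -/
theorem stmt_1 (α₁ α₂ : ℝ) (h12 : α₂ ≤ α₁) (h2 : 1 < α₂) :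
    ∃ p x y z : ℝ, dist p z = 1 ∧ dist y z ≤ 1 / α₁ ∧
      dist x y ≤ dist p y / α₂ ∧
      dist x z = (α₁ + α₂ + 1) / (α₁ * α₂) := by
  have h1 : (1:ℝ) < α₁ := lt_of_lt_of_le h2 h12
  have h1' : (0:ℝ) < α₁ := by linarith
  have h2' : (0:ℝ) < α₂ := by linarith
  have ha : (0:ℝ) < 1/α₁ := by positivity
  have hb : (0:ℝ) < (1 + 1/α₁)/α₂ := by positivity
  refine ⟨0, 1 + 1/α₁ + (1 + 1/α₁)/α₂, 1 + 1/α₁, 1, ?_, ?_, ?_, ?_⟩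
  · simp [Real.dist_eq]
  · rw [Real.dist_eq, abs_of_nonneg (by linarith)]
    linarith
  · rw [Real.dist_eq, Real.dist_eq, abs_of_nonneg (by linarith),
      abs_of_nonpos (by linarith)]
    ring_nf
    exact le_refl _
  · rw [Real.dist_eq, abs_of_nonneg (by linarith)]
    field_simp
    ring
end

section
/- For all vectors x, y, z ∈ ℝᵈ with ‖z‖ = 1, ‖x‖ ≤ ‖y‖ ≤ 1, ‖y − z‖ ≤ 1/α₁, and ‖x − y‖ ≤ ‖y‖/α₂, where α₁ ≥ α₂ > 1, one has ‖x − z‖ ≤ (1/α₁)·√(1 − 1/(4α₂²)) + (1/α₂)·√(1 − 1/(4α₁²)). -/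
/-!
Write `p = 1 / α₁ = 2 sin (θ₁ / 2)` and `q = 1 / α₂ = 2 sin (θ₂ / 2)`. Then `E = √(1 - p² / 4)` and
`F = √(1 - q² / 4)` are `cos (θ₁ / 2)` and `cos (θ₂ / 2)`, and the bound `p F + q E` is
`2 sin ((θ₁ + θ₂) / 2)`, the chord of the angle `θ₁ + θ₂`: it is attained with `x, y, z` on the unit
circle, `y` at angle `θ₁` from `z` and `x` at a further angle `θ₂`. The proof is the dual certificate
of the corresponding semidefinite program: `p q E F ((p F + q E)² ‖z‖² - ‖x - z‖²)` is a nonnegative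
combination of the slacks of the four hypotheses plus the square
`‖sin θ₁ • x - sin (θ₁ + θ₂) • y + sin θ₂ • z‖²`, which vanishes on the extremal configuration.
-/

open Real

section

variable {V : Type*} [NormedAddCommGroup V] [InnerProductSpace ℝ V]

/-- Here `p E = sin θ₁`, `q F = sin θ₂` and `S = sin (θ₁ + θ₂)`. -/
theorem chord_bound_certificate (x y z : V) {p q E F S : ℝ} (hE : E ^ 2 = 1 - p ^ 2 / 4)
    (hF : F ^ 2 = 1 - q ^ 2 / 4) (hS : S = p * E * (1 - q ^ 2 / 2) + q * F * (1 - p ^ 2 / 2)) :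
    p * q * E * F * ((p * F + q * E) ^ 2 * ‖z‖ ^ 2 - ‖x - z‖ ^ 2) =
      q * F * S * (p ^ 2 * ‖z‖ ^ 2 - ‖y - z‖ ^ 2) + p * E * S * (q ^ 2 * ‖y‖ ^ 2 - ‖x - y‖ ^ 2)
        + p ^ 2 / 2 * q * E * (p * F + q * E) * (‖y‖ ^ 2 - ‖x‖ ^ 2)
        + q ^ 2 / 2 * p * F * (p * F + q * E) * (‖z‖ ^ 2 - ‖y‖ ^ 2)
        + ‖(p * E) • x - S • y + (q * F) • z‖ ^ 2 := by
  rw [← real_inner_self_eq_norm_sq ((p * E) • x - S • y + (q * F) • z)]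
  simp only [norm_sub_sq_real, inner_add_left, inner_add_right, inner_sub_left, inner_sub_right,
    real_inner_smul_left, real_inner_smul_right, real_inner_self_eq_norm_sq, real_inner_comm x y,
    real_inner_comm x z, real_inner_comm y z, norm_smul, mul_pow, Real.norm_eq_abs, sq_abs]
  subst hS
  linear_combination
    (p * q ^ 3 * E * F * ‖z‖ ^ 2 - p ^ 2 * q ^ 2 * ‖y‖ ^ 2 + 2 * p ^ 2 * q ^ 2 * F ^ 2 * ‖z‖ ^ 2
        + 1 / 4 * p ^ 2 * q ^ 4 * ‖y‖ ^ 2) * hE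
      + (p ^ 2 * q ^ 2 * ‖y‖ ^ 2 + p ^ 3 * q * E * F * ‖z‖ ^ 2
        - 1 / 4 * p ^ 4 * q ^ 2 * ‖y‖ ^ 2) * hF

theorem norm_sub_le_of_chord_bounds {x y z : V} {p q : ℝ} (hp : 0 < p) (hq : 0 < q)
    (hp2 : p ^ 2 ≤ 2) (hq2 : q ^ 2 ≤ 2) (hyz : ‖y - z‖ ≤ p * ‖z‖) (hy : ‖y‖ ≤ ‖z‖)
    (hxy : ‖x - y‖ ≤ q * ‖y‖) (hx : ‖x‖ ≤ ‖y‖) :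
    ‖x - z‖ ≤ (p * √(1 - q ^ 2 / 4) + q * √(1 - p ^ 2 / 4)) * ‖z‖ := by
  set E := √(1 - p ^ 2 / 4)
  set F := √(1 - q ^ 2 / 4)
  have hE : 0 < E := sqrt_pos.2 (by linarith)
  have hF : 0 < F := sqrt_pos.2 (by linarith)
  set S := p * E * (1 - q ^ 2 / 2) + q * F * (1 - p ^ 2 / 2)
  have hS : 0 ≤ S := by
    have : 0 ≤ 1 - q ^ 2 / 2 := by linarith
    have : 0 ≤ 1 - p ^ 2 / 2 := by linarith
    positivity
  have hyz2 : ‖y - z‖ ^ 2 ≤ p ^ 2 * ‖z‖ ^ 2 := by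
    rw [← mul_pow]; exact pow_le_pow_left₀ (norm_nonneg _) hyz 2
  have hxy2 : ‖x - y‖ ^ 2 ≤ q ^ 2 * ‖y‖ ^ 2 := by
    rw [← mul_pow]; exact pow_le_pow_left₀ (norm_nonneg _) hxy 2
  have hy2 : ‖y‖ ^ 2 ≤ ‖z‖ ^ 2 := pow_le_pow_left₀ (norm_nonneg _) hy 2
  have hx2 : ‖x‖ ^ 2 ≤ ‖y‖ ^ 2 := pow_le_pow_left₀ (norm_nonneg _) hx 2
  have hdefect : 0 ≤ p * q * E * F * ((p * F + q * E) ^ 2 * ‖z‖ ^ 2 - ‖x - z‖ ^ 2) := by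
    rw [chord_bound_certificate x y z (sq_sqrt (by linarith)) (sq_sqrt (by linarith)) rfl]
    have := sub_nonneg.2 hyz2
    have := sub_nonneg.2 hxy2
    have := sub_nonneg.2 hy2
    have := sub_nonneg.2 hx2
    positivity
  have hsq : ‖x - z‖ ^ 2 ≤ ((p * F + q * E) * ‖z‖) ^ 2 := by
    rw [mul_pow]
    exact sub_nonneg.1 (nonneg_of_mul_nonneg_right hdefect (by positivity))
  exact pow_le_pow_iff_left₀ (norm_nonneg _) (by positivity) two_ne_zero |>.1 hsq

end

theorem stmt_7 (d : ℕ) (α₁ α₂ : ℝ) (h12 : α₂ ≤ α₁) (h2 : 1 < α₂)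
    (x y z : EuclideanSpace ℝ (Fin d))
    (hz : ‖z‖ = 1) (hxy : ‖x‖ ≤ ‖y‖) (hy : ‖y‖ ≤ 1)
    (hyz : ‖y - z‖ ≤ 1 / α₁) (hxy2 : ‖x - y‖ ≤ ‖y‖ / α₂) :
    ‖x - z‖ ≤ (1 / α₁) * Real.sqrt (1 - 1 / (4 * α₂ ^ 2)) +
      (1 / α₂) * Real.sqrt (1 - 1 / (4 * α₁ ^ 2)) := by
  have h1 : 1 < α₁ := h2.trans_le h12
  have hsq_le_two {α : ℝ} (hα : 1 < α) : (1 / α) ^ 2 ≤ 2 := by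
    have : 1 / α < 1 := (div_lt_one (by linarith)).2 hα
    nlinarith [one_div_pos.2 (zero_lt_one.trans hα)]
  have hbound := norm_sub_le_of_chord_bounds (one_div_pos.2 (by linarith : (0 : ℝ) < α₁))
    (one_div_pos.2 (by linarith : (0 : ℝ) < α₂)) (hsq_le_two h1) (hsq_le_two h2)
    (by rwa [hz, mul_one]) (hz ▸ hy) (by rwa [one_div_mul_eq_div]) hxy
  have hquarter (α : ℝ) : (1 / α) ^ 2 / 4 = 1 / (4 * α ^ 2) := by ring
  rwa [hz, mul_one, hquarter, hquarter] at hbound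
end

section
/- Let α₁ ≥ α₂ > 1, θᵢ = arcsin(1/(2αᵢ)), hᵢ = sin 2θᵢ, h₁₂ = sin(2θ₁+2θ₂), a = √(h₁/h₂), c = √(h₂/h₁), b = −h₁₂/√(h₁·h₂), β = 2·sin(θ₁+θ₂), and set λ₁ = (h₁+h₂−h₁₂)/h₂, λ₂ = (h₁+h₂−h₁₂)/h₁, λ₃ = h₁₂/h₁, λ₄ = h₁₂/h₂, λ₅ = β². Then for all x, y, z ∈ ℝᵈ: ‖x−z‖² − λ₁(‖x‖²−‖y‖²) − λ₂(‖y‖²−‖z‖²) − λ₃(‖y−z‖² − ‖z‖²/α₁²) − λ₄(‖x−y‖² − ‖y‖²/α₂²) − λ₅(‖z‖² − 1) = β² − ‖a·x + b·y + c·z‖². -/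
/-!
Expanding `‖a • x + b • y + c • z‖²` in the Gram entries `‖x‖², ‖y‖², ‖z‖², ⟪x, y⟫, ⟪x, z⟫, ⟪y, z⟫`,
the identity reduces to six scalar equations between the coefficients. With `hᵢ = sin 2θᵢ`,
`kᵢ = cos 2θᵢ`, they follow from `hᵢ² + kᵢ² = 1`, the addition formula
`h₁₂ = h₁ k₂ + k₁ h₂`, `β² = 2 - 2 cos(2θ₁ + 2θ₂)` and `1 / αᵢ² = 2 - 2 kᵢ`.
-/

open Real
open scoped InnerProductSpace

theorem norm_sub_sq_sub_lagrangian_eq {E : Type*} [NormedAddCommGroup E] [InnerProductSpace ℝ E]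
    {α₁ α₂ a b c β l₁ l₂ l₃ l₄ l₅ : ℝ}
    (hx : 1 - l₁ - l₄ = -a ^ 2) (hy : l₁ - l₂ - l₃ - l₄ + l₄ / α₂ ^ 2 = -b ^ 2)
    (hz : 1 + l₂ - l₃ + l₃ / α₁ ^ 2 - l₅ = -c ^ 2)
    (hxy : l₄ = -(a * b)) (hxz : a * c = 1) (hyz : l₃ = -(b * c)) (hl₅ : l₅ = β ^ 2)
    (x y z : E) :
    ‖x - z‖ ^ 2 - l₁ * (‖x‖ ^ 2 - ‖y‖ ^ 2) - l₂ * (‖y‖ ^ 2 - ‖z‖ ^ 2)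
        - l₃ * (‖y - z‖ ^ 2 - ‖z‖ ^ 2 / α₁ ^ 2)
        - l₄ * (‖x - y‖ ^ 2 - ‖y‖ ^ 2 / α₂ ^ 2)
        - l₅ * (‖z‖ ^ 2 - 1)
      = β ^ 2 - ‖a • x + b • y + c • z‖ ^ 2 := by
  have hnorm : ‖a • x + b • y + c • z‖ ^ 2
      = a ^ 2 * ‖x‖ ^ 2 + b ^ 2 * ‖y‖ ^ 2 + c ^ 2 * ‖z‖ ^ 2
        + 2 * (a * b) * ⟪x, y⟫_ℝ + 2 * (a * c) * ⟪x, z⟫_ℝ + 2 * (b * c) * ⟪y, z⟫_ℝ := by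
    simp only [norm_add_sq_real, inner_add_left, real_inner_smul_left, real_inner_smul_right,
      norm_smul, mul_pow, Real.norm_eq_abs, sq_abs]
    ring
  rw [hnorm, norm_sub_sq_real x z, norm_sub_sq_real y z, norm_sub_sq_real x y]
  linear_combination ‖x‖ ^ 2 * hx + ‖y‖ ^ 2 * hy + ‖z‖ ^ 2 * hz + 2 * ⟪x, y⟫_ℝ * hxy
    + 2 * ⟪x, z⟫_ℝ * hxz + 2 * ⟪y, z⟫_ℝ * hyz + hl₅

theorem sorted_prune_lagrangian_eq_of_sin_cos {E : Type*} [NormedAddCommGroup E]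
    [InnerProductSpace ℝ E]
    {α₁ α₂ h₁ h₂ k₁ k₂ h₁₂ β : ℝ} (hh₁ : 0 < h₁) (hh₂ : 0 < h₂)
    (hp₁ : h₁ ^ 2 + k₁ ^ 2 = 1) (hp₂ : h₂ ^ 2 + k₂ ^ 2 = 1)
    (hα₁ : 1 / α₁ ^ 2 = 2 - 2 * k₁) (hα₂ : 1 / α₂ ^ 2 = 2 - 2 * k₂)
    (hh₁₂ : h₁₂ = h₁ * k₂ + k₁ * h₂) (hβ : β ^ 2 = 2 - 2 * (k₁ * k₂ - h₁ * h₂))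
    (x y z : E) :
    ‖x - z‖ ^ 2 - (h₁ + h₂ - h₁₂) / h₂ * (‖x‖ ^ 2 - ‖y‖ ^ 2)
        - (h₁ + h₂ - h₁₂) / h₁ * (‖y‖ ^ 2 - ‖z‖ ^ 2)
        - h₁₂ / h₁ * (‖y - z‖ ^ 2 - ‖z‖ ^ 2 / α₁ ^ 2)
        - h₁₂ / h₂ * (‖x - y‖ ^ 2 - ‖y‖ ^ 2 / α₂ ^ 2)
        - β ^ 2 * (‖z‖ ^ 2 - 1)
      = β ^ 2 - ‖√(h₁ / h₂) • x + (-h₁₂ / √(h₁ * h₂)) • y + √(h₂ / h₁) • z‖ ^ 2 := by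
  set a := √(h₁ / h₂)
  set c := √(h₂ / h₁)
  set b := -h₁₂ / √(h₁ * h₂)
  have ha : a ^ 2 = h₁ / h₂ := sq_sqrt (by positivity)
  have hc : c ^ 2 = h₂ / h₁ := sq_sqrt (by positivity)
  have hb : b ^ 2 = h₁₂ ^ 2 / (h₁ * h₂) := by
    rw [div_pow, sq_sqrt (by positivity), neg_sq]
  have hac : a * c = 1 := by
    rw [← sqrt_mul (by positivity), div_mul_div_comm, mul_comm h₂, div_self (by positivity),
      sqrt_one]
  have ha₀ : 0 < a := sqrt_pos.2 (by positivity)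
  have hc₀ : 0 < c := sqrt_pos.2 (by positivity)
  have hsa : √(h₁ * h₂) = a * h₂ := by
    rw [show h₁ * h₂ = h₁ / h₂ * h₂ ^ 2 by field_simp, sqrt_mul (by positivity), sqrt_sq hh₂.le]
  have hsc : √(h₁ * h₂) = c * h₁ := by
    rw [show h₁ * h₂ = h₂ / h₁ * h₁ ^ 2 by field_simp, sqrt_mul (by positivity), sqrt_sq hh₁.le]
  have hab : a * b = -(h₁₂ / h₂) := by
    change a * (-h₁₂ / √(h₁ * h₂)) = _
    rw [hsa]
    field_simp
  have hbc : b * c = -(h₁₂ / h₁) := by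
    change -h₁₂ / √(h₁ * h₂) * c = _
    rw [hsc]
    field_simp
  refine norm_sub_sq_sub_lagrangian_eq ?_ ?_ ?_ (by rw [hab]; ring) hac (by rw [hbc]; ring) rfl
    x y z
  · rw [ha]
    field_simp
    ring
  · rw [div_eq_mul_one_div _ (α₂ ^ 2), hα₂, hb]
    field_simp
    linear_combination (h₁₂ - h₁ * k₂ + k₁ * h₂) * hh₁₂ + h₂ ^ 2 * hp₁ - h₁ ^ 2 * hp₂
  · rw [div_eq_mul_one_div _ (α₁ ^ 2), hα₁, hβ, hc]
    field_simp
    linear_combination (-(2 * k₁)) * hh₁₂ - (2 * h₂) * hp₁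

theorem sin_two_mul_arcsin_one_div_two_mul_pos {α : ℝ} (hα : 1 / 2 < α) :
    0 < sin (2 * arcsin (1 / (2 * α))) := by
  have hpos : 0 < 1 / (2 * α) := by positivity
  have hlt : 1 / (2 * α) < 1 := by rw [div_lt_one (by positivity)]; linarith
  apply sin_pos_of_pos_of_lt_pi (by linarith [arcsin_pos.2 hpos])
  linarith [arcsin_lt_pi_div_two.2 hlt]

theorem one_div_sq_eq_two_sub_two_mul_cos_two_mul_arcsin {α : ℝ} (hα : 1 / 2 ≤ α) :
    1 / α ^ 2 = 2 - 2 * cos (2 * arcsin (1 / (2 * α))) := by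
  have hα₀ : 0 < α := by linarith
  have hle : 1 / (2 * α) ≤ 1 := by rw [div_le_one (by positivity)]; linarith
  rw [cos_two_mul_eq_one_sub, sin_arcsin (by linarith [show 0 < 1 / (2 * α) by positivity]) hle]
  field_simp
  ring

theorem stmt_11 (d : ℕ) (α₁ α₂ : ℝ) (h12 : α₂ ≤ α₁) (h2 : 1 < α₂)
    (θ₁ θ₂ h₁ h₂ h₁₂ a b c β l₁ l₂ l₃ l₄ l₅ : ℝ)
    (hθ₁ : θ₁ = Real.arcsin (1 / (2 * α₁)))
    (hθ₂ : θ₂ = Real.arcsin (1 / (2 * α₂)))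
    (hh₁ : h₁ = Real.sin (2 * θ₁)) (hh₂ : h₂ = Real.sin (2 * θ₂))
    (hh₁₂ : h₁₂ = Real.sin (2 * θ₁ + 2 * θ₂))
    (ha : a = Real.sqrt (h₁ / h₂)) (hc : c = Real.sqrt (h₂ / h₁))
    (hb : b = -h₁₂ / Real.sqrt (h₁ * h₂))
    (hβ : β = 2 * Real.sin (θ₁ + θ₂))
    (hl₁ : l₁ = (h₁ + h₂ - h₁₂) / h₂) (hl₂ : l₂ = (h₁ + h₂ - h₁₂) / h₁)
    (hl₃ : l₃ = h₁₂ / h₁) (hl₄ : l₄ = h₁₂ / h₂) (hl₅ : l₅ = β ^ 2) :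
    ∀ x y z : EuclideanSpace ℝ (Fin d),
      ‖x - z‖ ^ 2 - l₁ * (‖x‖ ^ 2 - ‖y‖ ^ 2) - l₂ * (‖y‖ ^ 2 - ‖z‖ ^ 2)
        - l₃ * (‖y - z‖ ^ 2 - ‖z‖ ^ 2 / α₁ ^ 2)
        - l₄ * (‖x - y‖ ^ 2 - ‖y‖ ^ 2 / α₂ ^ 2)
        - l₅ * (‖z‖ ^ 2 - 1)
      = β ^ 2 - ‖a • x + b • y + c • z‖ ^ 2 := by
  have hα₁ : 1 / 2 < α₁ := by linarith
  have hα₂ : 1 / 2 < α₂ := by linarith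
  subst hθ₁ hθ₂ ha hb hc hl₁ hl₂ hl₃ hl₄ hl₅
  refine sorted_prune_lagrangian_eq_of_sin_cos (hh₁ ▸ sin_two_mul_arcsin_one_div_two_mul_pos hα₁)
    (hh₂ ▸ sin_two_mul_arcsin_one_div_two_mul_pos hα₂) (hh₁ ▸ sin_sq_add_cos_sq _)
    (hh₂ ▸ sin_sq_add_cos_sq _) (one_div_sq_eq_two_sub_two_mul_cos_two_mul_arcsin hα₁.le)
    (one_div_sq_eq_two_sub_two_mul_cos_two_mul_arcsin hα₂.le) (by rw [hh₁₂, hh₁, hh₂, sin_add]) ?_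
  rw [hβ, hh₁, hh₂, ← cos_add, mul_pow, sin_sq_eq_half_sub, mul_add]
  ring
end

section
/- Let (X,D) be a metric space, α₁ ≥ α₂ > 1, and let G = (P,E) be an α₁-reachable directed graph on a finite set P. Let G' = (P,E') be obtained by applying unsorted robust pruning with parameter α₂ at each vertex: for each p, E'-out-neighbors of p form a subset S of the E-out-neighbors such that every pruned neighbor p' has some retained neighbor p* ∈ S with α₂·D(p*,p') ≤ D(p,p'). Then G' is α*-reachable for α* = α₁·α₂/(α₁ + α₂ + 1), i.e., for all distinct p, z ∈ P, either (p,z) ∈ E' or some E'-out-neighbor x of p satisfies α*·D(x,z) ≤ D(p,z). -/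
/-- A directed graph `E` on vertex set `P` is `α`-reachable if for all distinct
`p, q ∈ P`, either `(p,q) ∈ E` or some out-neighbor `p'` of `p` satisfies
`D(p', q) * α ≤ D(p, q)`. -/
def IsAlphaReachable {X : Type*} [MetricSpace X] (P : Finset X)
    (E : X → X → Prop) (α : ℝ) : Prop :=
  ∀ p ∈ P, ∀ q ∈ P, p ≠ q →
    E p q ∨ ∃ p', E p p' ∧ dist p' q * α ≤ dist p q

theorem stmt_13 {X : Type*} [MetricSpace X] (α₁ α₂ : ℝ)
    (h12 : α₂ ≤ α₁) (h2 : 1 < α₂)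
    (P : Finset X) (E E' : X → X → Prop)
    (hG : IsAlphaReachable P E α₁)
    (hsub : ∀ p q, E' p q → E p q)
    (hprune : ∀ p y, E p y → ¬ E' p y →
      ∃ x, E' p x ∧ α₂ * dist x y ≤ dist p y) :
    IsAlphaReachable P E' (α₁ * α₂ / (α₁ + α₂ + 1)) := by
  have h1 : (1:ℝ) < α₁ := lt_of_lt_of_le h2 h12
  have hden : (0:ℝ) < α₁ + α₂ + 1 := by linarith
  intro p hp q hq hpq
  have key : ∀ x, dist x q * (α₁ * α₂) ≤ dist p q * (α₁ + α₂ + 1) →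
      dist x q * (α₁ * α₂ / (α₁ + α₂ + 1)) ≤ dist p q := by
    intro x hx
    rw [mul_div_assoc', div_le_iff₀ hden]
    linarith
  rcases hG p hp q hq hpq with hE | ⟨p', hpp', hd⟩
  · by_cases hE' : E' p q
    · exact Or.inl hE'
    · rcases hprune p q hE hE' with ⟨x, hx, hxd⟩
      refine Or.inr ⟨x, hx, key x ?_⟩
      have hd0 : 0 ≤ dist p q := dist_nonneg
      nlinarith [mul_le_mul_of_nonneg_left hxd (by linarith : (0:ℝ) ≤ α₁)]
  · by_cases hE' : E' p p'
    · refine Or.inr ⟨p', hE', key p' ?_⟩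
      have hd0 : 0 ≤ dist p q := dist_nonneg
      nlinarith [mul_le_mul_of_nonneg_right hd (by linarith : (0:ℝ) ≤ α₂)]
    · have hEpp' : E p p' := hpp'
      rcases hprune p p' hEpp' hE' with ⟨x, hx, hxd⟩
      refine Or.inr ⟨x, hx, key x ?_⟩
      have htri : dist x q ≤ dist x p' + dist p' q := dist_triangle x p' q
      have htri2 : dist p p' ≤ dist p q + dist q p' := dist_triangle p q p'
      rw [dist_comm q p'] at htri2
      have h0 : 0 ≤ dist x p' := dist_nonneg
      have h0' : 0 ≤ dist p' q := dist_nonneg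
      have e1 := mul_le_mul_of_nonneg_left htri (by nlinarith : (0:ℝ) ≤ α₁ * α₂)
      have e2 := mul_le_mul_of_nonneg_left hxd (by linarith : (0:ℝ) ≤ α₁)
      have e3 := mul_le_mul_of_nonneg_left htri2 (by linarith : (0:ℝ) ≤ α₁)
      have e4 := mul_le_mul_of_nonneg_right hd (by linarith : (0:ℝ) ≤ α₂)
      nlinarith [dist_nonneg (x := p) (y := q)]
end
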